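/- arXiv:2308.11061 — 7 statements merged into one kernel-verified Lean document; each statement's English description precedes it below -/
import Mathlib

section
/- Assume that W ∈ Mat_X(ℂ) is a spin model. Then W^(-) is a spin model. -/
/-!
The star-triangle condition says that, for fixed `a, b`, the vector `e ↦ W_{e,a} / W_{e,b}` is an
eigenvector of `W` with eigenvalue `√n / W_{a,b}`, where `n = |X|`. Type II forces
`W^(-) W = n I`, so the same vector is an eigenvector of `W^(-)` with eigenvalue `√n W_{a,b}`;
its `c`-th entry is the star-triangle condition for `W^(-)`. Symmetry and type II pass to `W^(-)`
directly, the latter because `W^(-)^(-) = W`.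
-/

open Matrix Finset

/-- The matrix `W^(-)` with `(a,b)`-entry `1 / W_{b,a}`. -/
noncomputable def matMinus {X : Type*} (W : Matrix X X ℂ) : Matrix X X ℂ :=
  Matrix.of fun a b => (W b a)⁻¹

/-- A matrix is of type II whenever all its entries are nonzero and
`W * W^(-)` is a scalar multiple of the identity. -/
def IsTypeII {X : Type*} [Fintype X] [DecidableEq X] (W : Matrix X X ℂ) : Prop :=
  (∀ a b, W a b ≠ 0) ∧ ∃ c : ℂ, W * matMinus W = c • (1 : Matrix X X ℂ)

/-- A spin model is a symmetric type II matrix satisfying the star-triangle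
(type III) condition. -/
def IsSpinModel {X : Type*} [Fintype X] [DecidableEq X] (W : Matrix X X ℂ) : Prop :=
  W.IsSymm ∧ IsTypeII W ∧
    ∀ a b c : X, ∑ e : X, W e b * W e c / W e a =
      (Real.sqrt (Fintype.card X) : ℂ) * W b c / (W a b * W c a)

section

variable {X : Type*}

@[simp]
theorem matMinus_apply (W : Matrix X X ℂ) (a b : X) : matMinus W a b = (W b a)⁻¹ :=
  rfl

@[simp]
theorem matMinus_matMinus (W : Matrix X X ℂ) : matMinus (matMinus W) = W := by
  ext a b
  simp

theorem Matrix.IsSymm.matMinus {W : Matrix X X ℂ} (hW : W.IsSymm) : (matMinus W).IsSymm := by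
  ext a b
  simp [hW.apply a b]

end

theorem Matrix.mulVec_eq_div_smul_of_mul_eq_smul_one {n K : Type*} [Fintype n] [DecidableEq n]
    [Field K] {A B : Matrix n n K} {c μ : K} {v : n → K} (hAB : A * B = c • 1) (hμ : μ ≠ 0)
    (hv : B *ᵥ v = μ • v) : A *ᵥ v = (c / μ) • v := by
  have h : μ • (A *ᵥ v) = c • v := by
    rw [← mulVec_smul, ← hv, mulVec_mulVec, hAB, smul_mulVec, one_mulVec]
  rw [div_eq_inv_mul, mul_smul, ← h, smul_smul, inv_mul_cancel₀ hμ, one_smul]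

section TypeII

variable {X : Type*} [Fintype X] [DecidableEq X] {W : Matrix X X ℂ}

theorem IsTypeII.mul_matMinus_eq_card_smul (hW : IsTypeII W) :
    W * matMinus W = (Fintype.card X : ℂ) • 1 := by
  obtain ⟨hnz, c, hc⟩ := hW
  have hdiag (a : X) : (W * matMinus W) a a = Fintype.card X := by
    simp [mul_apply, mul_inv_cancel₀ (hnz a _)]
  ext a b
  have hca : c = Fintype.card X := by simpa [hc] using hdiag a
  simp [hc, hca]

theorem IsTypeII.matMinus_mul_eq_card_smul (hW : IsTypeII W) :
    matMinus W * W = (Fintype.card X : ℂ) • 1 := by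
  rcases isEmpty_or_nonempty X with hX | hX
  · exact Subsingleton.elim _ _
  have hn : (Fintype.card X : ℂ) ≠ 0 := Nat.cast_ne_zero.mpr Fintype.card_ne_zero
  have h : W * ((Fintype.card X : ℂ)⁻¹ • matMinus W) = 1 := by
    rw [Matrix.mul_smul, hW.mul_matMinus_eq_card_smul, smul_smul, inv_mul_cancel₀ hn, one_smul]
  rw [← smul_inv_smul₀ hn (matMinus W * W), ← Matrix.smul_mul, mul_eq_one_comm.mp h]

theorem IsTypeII.matMinus (hW : IsTypeII W) : IsTypeII (matMinus W) :=
  ⟨fun a b => inv_ne_zero (hW.1 b a),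
    _, by rw [matMinus_matMinus]; exact hW.matMinus_mul_eq_card_smul⟩

end TypeII

section StarTriangle

variable {X : Type*} [Fintype X] {W : Matrix X X ℂ} {s : ℂ}

theorem mulVec_div_eq_smul_of_starTriangle (hsym : W.IsSymm)
    (hst : ∀ a b c, ∑ e, W e b * W e c / W e a = s * W b c / (W a b * W c a)) (a b : X) :
    W *ᵥ (fun e => W e a / W e b) = (s / W a b) • fun e => W e a / W e b := by
  ext x
  simp only [mulVec, dotProduct, Pi.smul_apply, smul_eq_mul]
  calc ∑ e, W x e * (W e a / W e b) = ∑ e, W e x * W e a / W e b := by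
        refine sum_congr rfl fun e _ => ?_
        rw [hsym.apply e x, mul_div_assoc]
    _ = s * W x a / (W b x * W a b) := hst b x a
    _ = s / W a b * (W x a / W x b) := by
        rw [hsym.apply x b]
        ring

variable [DecidableEq X]

theorem starTriangle_matMinus (hsym : W.IsSymm) (hnz : ∀ a b, W a b ≠ 0)
    (hII : matMinus W * W = (Fintype.card X : ℂ) • 1) (hs : s ^ 2 = Fintype.card X)
    (hst : ∀ a b c, ∑ e, W e b * W e c / W e a = s * W b c / (W a b * W c a)) (a b c : X) :
    ∑ e, matMinus W e b * matMinus W e c / matMinus W e a =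
      s * matMinus W b c / (matMinus W a b * matMinus W c a) := by
  have hn : (Fintype.card X : ℂ) ≠ 0 := Nat.cast_ne_zero.mpr (Fintype.card_pos_iff.mpr ⟨a⟩).ne'
  have hs0 : s ≠ 0 := ne_zero_pow two_ne_zero (hs ▸ hn)
  have hv := congrFun (mulVec_eq_div_smul_of_mul_eq_smul_one hII (div_ne_zero hs0 (hnz a b))
    (mulVec_div_eq_smul_of_starTriangle hsym hst a b)) c
  simp only [mulVec, dotProduct, matMinus_apply, Pi.smul_apply, smul_eq_mul] at hv
  calc ∑ e, matMinus W e b * matMinus W e c / matMinus W e a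
        = ∑ e, (W e c)⁻¹ * (W e a / W e b) := by
        refine sum_congr rfl fun e _ => ?_
        simp only [matMinus_apply, hsym.apply e a, hsym.apply e b, hsym.apply e c, div_inv_eq_mul]
        ring
    _ = Fintype.card X / (s / W a b) * (W c a / W c b) := hv
    _ = s * matMinus W b c / (matMinus W a b * matMinus W c a) := by
        simp only [matMinus_apply, hsym.apply a b, hsym.apply c a, ← hs]
        field_simp

end StarTriangle

theorem spinModel_matMinus_general {X : Type*} [Fintype X] [DecidableEq X]
    (W : Matrix X X ℂ) (hW : IsSpinModel W) :
    IsSpinModel (matMinus W) := by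
  obtain ⟨hsym, hII, hst⟩ := hW
  have hsqrt : (Real.sqrt (Fintype.card X) : ℂ) ^ 2 = Fintype.card X := by
    rw [← Complex.ofReal_pow, Real.sq_sqrt (Nat.cast_nonneg _), Complex.ofReal_natCast]
  exact ⟨hsym.matMinus, hII.matMinus,
    starTriangle_matMinus hsym hII.1 hII.matMinus_mul_eq_card_smul hsqrt hst⟩

theorem spinModel_matMinus {X : Type*} [Fintype X] [DecidableEq X] [Nonempty X]
    (W : Matrix X X ℂ) (hW : IsSpinModel W) :
    IsSpinModel (matMinus W) :=
  spinModel_matMinus_general W hW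
end

section
/- The following two relations hold: A²B − β·ABA + BA² + (q² − q^{−2})²·B = (q² − q^{−2})²·Z − (q − q^{−1})(q² − q^{−2})·Z·A, and B²A − β·BAB + AB² + (q² − q^{−2})²·A = (q² − q^{−2})²·Z − (q − q^{−1})(q² − q^{−2})·Z·B. -/
/-! Sandwich both sides between the idempotents `E i` and `E j`, which sum to `1`. Since
`E i A = ϑ i E i` and `A E j = ϑ j E j`, the left side becomes
`(ϑ i ^ 2 - β ϑ i ϑ j + ϑ j ^ 2 + (q ^ 2 - q ^ (-2)) ^ 2) • E i B E j`, while the right side vanishes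
for `i ≠ j` because `E i Z` is a multiple of `E i B E i`. For `|i - j| > 1` the left side vanishes
since `B` acts tridiagonally, for `|i - j| = 1` the scalar vanishes because
`ϑ i = x t ^ i + y t⁻¹ ^ i` with `t = q ^ 2` and `x y = 1`, and for `i = j` the factor
`1 + ϑ i / (q + q⁻¹)` in `Z` is exactly what matches the two sides, via
`q ^ 2 - q ^ (-2) = (q - q⁻¹) (q + q⁻¹)`. The second relation is the first one for the pair
`(E*, B)` in place of `(E, A)`. -/

section Sandwich

variable {K R : Type*} [CommRing K] [Ring R] [Algebra K R]

def tridiagonalForm (β γ : K) (A B : R) : R :=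
  A * A * B - β • (A * B * A) + B * (A * A) + γ • B

theorem mul_tridiagonalForm_mul {A B x y : R} {a b : K} (hx : x * A = a • x) (hy : A * y = b • y)
    (β γ : K) :
    x * tridiagonalForm β γ A B * y = (a ^ 2 - β * a * b + b ^ 2 + γ) • (x * B * y) := by
  have hAAB : x * (A * A * B) * y = a ^ 2 • (x * B * y) := by
    rw [show x * (A * A * B) * y = x * A * A * (B * y) by simp only [mul_assoc], hx, smul_mul_assoc,
      hx]
    simp only [smul_mul_assoc, smul_smul, sq, mul_assoc]
  have hABA : x * (A * B * A) * y = (a * b) • (x * B * y) := by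
    rw [show x * (A * B * A) * y = x * A * B * (A * y) by simp only [mul_assoc], hx, hy,
      smul_mul_assoc, smul_mul_assoc, mul_smul_comm, smul_smul]
  have hBAA : x * (B * (A * A)) * y = b ^ 2 • (x * B * y) := by
    rw [show x * (B * (A * A)) * y = x * B * (A * (A * y)) by simp only [mul_assoc], hy,
      mul_smul_comm, hy, mul_smul_comm, mul_smul_comm, smul_smul, sq]
  simp only [tridiagonalForm, mul_add, mul_sub, add_mul, sub_mul, mul_smul_comm, smul_mul_assoc,
    hAAB, hABA, hBAA, smul_smul]
  module

theorem mul_sub_smul_mul_mul {A Z w x y : R} {b c : K} (hx : x * Z = c • w) (hy : A * y = b • y)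
    (ε δ : K) :
    x * (ε • Z - δ • (Z * A)) * y = (c * (ε - δ * b)) • (w * y) := by
  have hZ : x * Z * y = c • (w * y) := by rw [hx, smul_mul_assoc]
  have hZA : x * (Z * A) * y = (c * b) • (w * y) := by
    rw [show x * (Z * A) * y = x * Z * (A * y) by simp only [mul_assoc], hx, hy, smul_mul_assoc,
      mul_smul_comm, smul_smul]
  rw [mul_sub, sub_mul, mul_smul_comm, mul_smul_comm, smul_mul_assoc, smul_mul_assoc, hZ, hZA]
  module

end Sandwich

section Idempotents

variable {K R ι : Type*} [CommRing K] [Ring R] [Algebra K R] {s : Finset ι} {e : ι → R}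

theorem eq_of_forall_mul_mul_eq (hsum : ∑ i ∈ s, e i = 1) {M N : R}
    (h : ∀ i ∈ s, ∀ j ∈ s, e i * M * e j = e i * N * e j) : M = N := by
  have hsand : ∀ P : R, P = ∑ i ∈ s, ∑ j ∈ s, e i * P * e j := fun P => by
    conv_lhs => rw [← one_mul P, ← mul_one (1 * P), ← hsum]
    simp only [Finset.sum_mul, Finset.mul_sum]
    exact Finset.sum_comm
  rw [hsand M, hsand N]
  exact Finset.sum_congr rfl fun i hi => Finset.sum_congr rfl fun j hj => h i hi j hj

variable [DecidableEq ι]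

theorem mul_sum_smul_of_orthogonal (he : ∀ i ∈ s, ∀ j ∈ s, e i * e j = if i = j then e i else 0)
    (θ : ι → K) {i : ι} (hi : i ∈ s) : e i * ∑ j ∈ s, θ j • e j = θ i • e i := by
  rw [Finset.mul_sum, Finset.sum_eq_single_of_mem i hi]
  · rw [mul_smul_comm, he i hi i hi, if_pos rfl]
  · intro j hj hji
    rw [mul_smul_comm, he i hi j hj, if_neg hji.symm, smul_zero]

theorem sum_smul_mul_of_orthogonal (he : ∀ i ∈ s, ∀ j ∈ s, e i * e j = if i = j then e i else 0)
    (θ : ι → K) {i : ι} (hi : i ∈ s) : (∑ j ∈ s, θ j • e j) * e i = θ i • e i := by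
  rw [Finset.sum_mul, Finset.sum_eq_single_of_mem i hi]
  · rw [smul_mul_assoc, he i hi i hi, if_pos rfl]
  · intro j hj hji
    rw [smul_mul_assoc, he j hj i hi, if_neg hji, smul_zero]

end Idempotents

theorem tridiagonalForm_eq_of_idempotents {K R : Type*} [CommRing K] [Ring R] [Algebra K R]
    {s : Finset ℤ} {e : ℤ → R} (hsum : ∑ i ∈ s, e i = 1)
    (he : ∀ i ∈ s, ∀ j ∈ s, e i * e j = if i = j then e i else 0)
    {θ c : ℤ → K} {β γ ε δ : K} {A B Z : R} (hA : A = ∑ i ∈ s, θ i • e i)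
    (hB : ∀ i ∈ s, ∀ j ∈ s, 1 < |i - j| → e i * B * e j = 0)
    (hZ : ∀ i ∈ s, e i * Z = c i • (e i * B * e i))
    (hadj : ∀ i, θ i ^ 2 - β * θ i * θ (i + 1) + θ (i + 1) ^ 2 + γ = 0)
    (hdiag : ∀ i ∈ s, θ i ^ 2 - β * θ i * θ i + θ i ^ 2 + γ = c i * (ε - δ * θ i)) :
    tridiagonalForm β γ A B = ε • Z - δ • (Z * A) := by
  refine eq_of_forall_mul_mul_eq hsum fun i hi j hj => ?_
  have hAe : ∀ k ∈ s, A * e k = θ k • e k := fun k hk => hA ▸ sum_smul_mul_of_orthogonal he θ hk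
  rw [mul_tridiagonalForm_mul (hA ▸ mul_sum_smul_of_orthogonal he θ hi) (hAe j hj),
    mul_sub_smul_mul_mul (hZ i hi) (hAe j hj), mul_assoc (e i * B), he i hi j hj]
  rcases eq_or_ne i j with rfl | hij
  · rw [if_pos rfl, hdiag i hi]
  rw [if_neg hij, mul_zero, smul_zero]
  rcases lt_or_ge 1 |i - j| with hfar | hnear
  · rw [hB i hi j hj hfar, smul_zero]
  obtain rfl | rfl : j = i + 1 ∨ i = j + 1 := by
    have := abs_le.mp hnear
    omega
  · rw [hadj i, zero_smul]
  · rw [show θ (j + 1) ^ 2 - β * θ (j + 1) * θ j + θ j ^ 2 + γ = 0 by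
      linear_combination hadj j, zero_smul]

section Scalars

variable {K : Type*} [Field K] {q : K}

theorem eigenvalue_adjacent_relation {a : K} {D : ℤ} {θ : ℤ → K} (hq : q ≠ 0) (ha : a ≠ 0)
    (hθ : ∀ i, θ i = a * q ^ (2 * i - D) + a⁻¹ * q ^ (D - 2 * i)) (i : ℤ) :
    θ i ^ 2 - (q ^ (2 : ℤ) + q ^ (-2 : ℤ)) * θ i * θ (i + 1) + θ (i + 1) ^ 2
      + (q ^ (2 : ℤ) - q ^ (-2 : ℤ)) ^ 2 = 0 := by
  set u := q ^ (2 * i - D)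
  have hu : u ≠ 0 := zpow_ne_zero _ hq
  have hθi : θ i = a * u + a⁻¹ * u⁻¹ := by
    rw [hθ, show D - 2 * i = -(2 * i - D) by ring, zpow_neg]
  have hθi' : θ (i + 1) = a * u * q ^ 2 + a⁻¹ * u⁻¹ * (q ^ 2)⁻¹ := by
    rw [hθ, show 2 * (i + 1) - D = 2 * i - D + 2 by ring,
      show D - 2 * (i + 1) = -(2 * i - D) + -2 by ring, zpow_add₀ hq, zpow_add₀ hq, zpow_neg,
      zpow_neg, mul_assoc, mul_assoc]
    norm_cast
  rw [hθi, hθi', zpow_neg]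
  norm_cast
  field_simp
  ring

theorem eigenvalue_diagonal_relation (hq : q ≠ 0) (hq2 : q ^ 2 ≠ -1) (θ : K) :
    θ ^ 2 - (q ^ (2 : ℤ) + q ^ (-2 : ℤ)) * θ * θ + θ ^ 2 + (q ^ (2 : ℤ) - q ^ (-2 : ℤ)) ^ 2
      = (1 + θ / (q + q⁻¹)) * ((q ^ (2 : ℤ) - q ^ (-2 : ℤ)) ^ 2
        - (q - q⁻¹) * (q ^ (2 : ℤ) - q ^ (-2 : ℤ)) * θ) := by
  have hq' : q ^ 2 + 1 ≠ 0 := fun h => hq2 (eq_neg_of_add_eq_zero_left h)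
  have hqq : q + q⁻¹ ≠ 0 := by
    rw [show q + q⁻¹ = (q ^ 2 + 1) / q by field_simp]
    exact div_ne_zero hq' hq
  rw [zpow_neg]
  norm_cast
  field_simp
  ring

end Scalars

open Matrix Finset

theorem tridiagonal_relations_with_Z_general
    {X : Type*} [Fintype X] [DecidableEq X]
    (D : ℤ) (q a : ℂ) (hq : q ≠ 0) (ha : a ≠ 0)
    (hq2 : q ^ 2 ≠ -1)
    (ϑ : ℤ → ℂ)
    (hϑ : ∀ i : ℤ, ϑ i = a * q ^ (2 * i - D) + a⁻¹ * q ^ (D - 2 * i))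
    (β : ℂ) (hβ : β = q ^ (2 : ℤ) + q ^ (-2 : ℤ))
    (E Estar : ℤ → Matrix X X ℂ)
    (hEsum : ∑ i ∈ Finset.Icc (0 : ℤ) D, E i = 1)
    (hEmul : ∀ i ∈ Finset.Icc (0 : ℤ) D, ∀ j ∈ Finset.Icc (0 : ℤ) D,
      E i * E j = if i = j then E i else 0)
    (hEssum : ∑ i ∈ Finset.Icc (0 : ℤ) D, Estar i = 1)
    (hEsmul : ∀ i ∈ Finset.Icc (0 : ℤ) D, ∀ j ∈ Finset.Icc (0 : ℤ) D,
      Estar i * Estar j = if i = j then Estar i else 0)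
    (A B : Matrix X X ℂ)
    (hA : A = ∑ i ∈ Finset.Icc (0 : ℤ) D, ϑ i • E i)
    (hB : B = ∑ i ∈ Finset.Icc (0 : ℤ) D, ϑ i • Estar i)
    (htriE : ∀ i ∈ Finset.Icc (0 : ℤ) D, ∀ j ∈ Finset.Icc (0 : ℤ) D,
      1 < |i - j| → E i * B * E j = 0)
    (htriEs : ∀ i ∈ Finset.Icc (0 : ℤ) D, ∀ j ∈ Finset.Icc (0 : ℤ) D,
      1 < |i - j| → Estar i * A * Estar j = 0)
    (Z : Matrix X X ℂ)
    (hZE : ∀ i ∈ Finset.Icc (0 : ℤ) D,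
      Z * E i = (1 + ϑ i / (q + q⁻¹)) • (E i * B * E i) ∧
      E i * Z = (1 + ϑ i / (q + q⁻¹)) • (E i * B * E i))
    (hZEs : ∀ i ∈ Finset.Icc (0 : ℤ) D,
      Z * Estar i = (1 + ϑ i / (q + q⁻¹)) • (Estar i * A * Estar i) ∧
      Estar i * Z = (1 + ϑ i / (q + q⁻¹)) • (Estar i * A * Estar i))
    :
    (A * A * B - β • (A * B * A) + B * (A * A)
        + ((q ^ (2 : ℤ) - q ^ (-2 : ℤ)) ^ 2) • B
      = ((q ^ (2 : ℤ) - q ^ (-2 : ℤ)) ^ 2) • Z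
        - ((q - q⁻¹) * (q ^ (2 : ℤ) - q ^ (-2 : ℤ))) • (Z * A)) ∧
    (B * B * A - β • (B * A * B) + A * (B * B)
        + ((q ^ (2 : ℤ) - q ^ (-2 : ℤ)) ^ 2) • A
      = ((q ^ (2 : ℤ) - q ^ (-2 : ℤ)) ^ 2) • Z
        - ((q - q⁻¹) * (q ^ (2 : ℤ) - q ^ (-2 : ℤ))) • (Z * B)) := by
  subst hβ
  have hadj := eigenvalue_adjacent_relation hq ha hϑ
  have hdiag := eigenvalue_diagonal_relation hq hq2
  exact ⟨tridiagonalForm_eq_of_idempotents hEsum hEmul hA htriE (fun i hi => (hZE i hi).2) hadj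
      fun i _ => hdiag (ϑ i),
    tridiagonalForm_eq_of_idempotents hEssum hEsmul hB htriEs (fun i hi => (hZEs i hi).2) hadj
      fun i _ => hdiag (ϑ i)⟩

theorem tridiagonal_relations_with_Z
    {X : Type*} [Fintype X] [DecidableEq X] [Nonempty X]
    (D : ℤ) (hD : 3 ≤ D) (q a : ℂ) (hq : q ≠ 0) (ha : a ≠ 0)
    (hq1 : q ^ 2 ≠ 1) (hq2 : q ^ 2 ≠ -1)
    (ϑ : ℤ → ℂ)
    (hϑ : ∀ i : ℤ, ϑ i = a * q ^ (2 * i - D) + a⁻¹ * q ^ (D - 2 * i))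
    (β : ℂ) (hβ : β = q ^ (2 : ℤ) + q ^ (-2 : ℤ))
    (E Estar : ℤ → Matrix X X ℂ)
    (hEsum : ∑ i ∈ Finset.Icc (0 : ℤ) D, E i = 1)
    (hEmul : ∀ i ∈ Finset.Icc (0 : ℤ) D, ∀ j ∈ Finset.Icc (0 : ℤ) D,
      E i * E j = if i = j then E i else 0)
    (hEssum : ∑ i ∈ Finset.Icc (0 : ℤ) D, Estar i = 1)
    (hEsmul : ∀ i ∈ Finset.Icc (0 : ℤ) D, ∀ j ∈ Finset.Icc (0 : ℤ) D,
      Estar i * Estar j = if i = j then Estar i else 0)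
    (A B : Matrix X X ℂ)
    (hA : A = ∑ i ∈ Finset.Icc (0 : ℤ) D, ϑ i • E i)
    (hB : B = ∑ i ∈ Finset.Icc (0 : ℤ) D, ϑ i • Estar i)
    (htriE : ∀ i ∈ Finset.Icc (0 : ℤ) D, ∀ j ∈ Finset.Icc (0 : ℤ) D,
      1 < |i - j| → E i * B * E j = 0)
    (htriEs : ∀ i ∈ Finset.Icc (0 : ℤ) D, ∀ j ∈ Finset.Icc (0 : ℤ) D,
      1 < |i - j| → Estar i * A * Estar j = 0)
    (Z : Matrix X X ℂ)
    (hZE : ∀ i ∈ Finset.Icc (0 : ℤ) D,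
      Z * E i = (1 + ϑ i / (q + q⁻¹)) • (E i * B * E i) ∧
      E i * Z = (1 + ϑ i / (q + q⁻¹)) • (E i * B * E i))
    (hZEs : ∀ i ∈ Finset.Icc (0 : ℤ) D,
      Z * Estar i = (1 + ϑ i / (q + q⁻¹)) • (Estar i * A * Estar i) ∧
      Estar i * Z = (1 + ϑ i / (q + q⁻¹)) • (Estar i * A * Estar i))
    :
    (A * A * B - β • (A * B * A) + B * (A * A)
        + ((q ^ (2 : ℤ) - q ^ (-2 : ℤ)) ^ 2) • B
      = ((q ^ (2 : ℤ) - q ^ (-2 : ℤ)) ^ 2) • Z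
        - ((q - q⁻¹) * (q ^ (2 : ℤ) - q ^ (-2 : ℤ))) • (Z * A)) ∧
    (B * B * A - β • (B * A * B) + A * (B * B)
        + ((q ^ (2 : ℤ) - q ^ (-2 : ℤ)) ^ 2) • A
      = ((q ^ (2 : ℤ) - q ^ (-2 : ℤ)) ^ 2) • Z
        - ((q - q⁻¹) * (q ^ (2 : ℤ) - q ^ (-2 : ℤ))) • (Z * B)) :=
  tridiagonal_relations_with_Z_general D q a hq ha hq2 ϑ hϑ β hβ E Estar hEsum hEmul hEssum hEsmul A
    B hA hB htriE htriEs Z hZE hZEs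
end

section
/- Let W = Σ_{i=0}^D α_i·E_i with all α_i ≠ 0. Then W is invertible with W^{−1} = Σ_{i=0}^D α_i^{−1}·E_i, and C − W^{−1}·B·W = Σ_{0≤i,j≤D, |i−j|=1} ((q^{−1}·ϑ_j − q·ϑ_i)/(q² − q^{−2}) − α_j/α_i) · E_i·B·E_j. -/
open Matrix Finset

/-! Since the `E i` are orthogonal idempotents summing to `1`, every matrix `M` splits into blocks
`E i * M * E j`, and `Z`, `A * B`, `B * A` and `W⁻¹ * B * W` are scalar multiples of `E i * B * E j`
blockwise. The identity therefore reduces to one scalar identity per block: off the diagonal it is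
a ring identity, on the diagonal it is `(q - q⁻¹) / (q² - q⁻²) = 1 / (q + q⁻¹)`, and blocks with
`|i - j| > 1` vanish by the tridiagonality of `B`. -/

section OrthogonalIdempotents

variable {K R ι : Type*} [CommSemiring K] [Semiring R] [Algebra K R] {s : Finset ι} {E : ι → R}

theorem sum_smul_mul_mul_sum_smul (f g : ι → K) (M : R) :
    (∑ i ∈ s, f i • E i) * M * (∑ j ∈ s, g j • E j) =
      ∑ i ∈ s, ∑ j ∈ s, (f i * g j) • (E i * M * E j) := by
  rw [Finset.sum_mul, Finset.sum_mul]
  refine Finset.sum_congr rfl fun i _ => ?_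
  rw [Finset.mul_sum]
  refine Finset.sum_congr rfl fun j _ => ?_
  rw [smul_mul_assoc, smul_mul_assoc, mul_smul_comm, smul_smul]

theorem sum_smul_mul_eq_sum_sum (hEsum : ∑ i ∈ s, E i = 1) (f : ι → K) (M : R) :
    (∑ i ∈ s, f i • E i) * M = ∑ i ∈ s, ∑ j ∈ s, f i • (E i * M * E j) := by
  simpa [hEsum] using sum_smul_mul_mul_sum_smul (s := s) (E := E) f 1 M

theorem mul_sum_smul_eq_sum_sum (hEsum : ∑ i ∈ s, E i = 1) (g : ι → K) (M : R) :
    M * (∑ j ∈ s, g j • E j) = ∑ i ∈ s, ∑ j ∈ s, g j • (E i * M * E j) := by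
  simpa [hEsum] using sum_smul_mul_mul_sum_smul (s := s) (E := E) 1 g M

theorem eq_sum_sum_ite_smul_of_mul_eq [DecidableEq ι] (hEsum : ∑ i ∈ s, E i = 1) {Z M : R}
    {c : ι → K} (hZ : ∀ i ∈ s, Z * E i = c i • (E i * M * E i)) :
    Z = ∑ i ∈ s, ∑ j ∈ s, (if i = j then c i else 0) • (E i * M * E j) := by
  calc Z = ∑ i ∈ s, Z * E i := by rw [← Finset.mul_sum, hEsum, mul_one]
    _ = _ := Finset.sum_congr rfl fun i hi => by simp [hZ i hi, ite_smul, hi]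

theorem sum_smul_mul_sum_smul_of_orthogonal [DecidableEq ι]
    (hE : ∀ i ∈ s, ∀ j ∈ s, E i * E j = if i = j then E i else 0) (f g : ι → K) :
    (∑ i ∈ s, f i • E i) * (∑ i ∈ s, g i • E i) = ∑ i ∈ s, (f i * g i) • E i := by
  rw [Finset.sum_mul_sum]
  refine Finset.sum_congr rfl fun i hi => ?_
  rw [Finset.sum_congr rfl fun j hj => by rw [smul_mul_smul_comm, hE i hi j hj]]
  simp [smul_ite, hi]

theorem sum_smul_mul_sum_smul_eq_one [DecidableEq ι] (hEsum : ∑ i ∈ s, E i = 1)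
    (hE : ∀ i ∈ s, ∀ j ∈ s, E i * E j = if i = j then E i else 0) {f g : ι → K}
    (hfg : ∀ i ∈ s, f i * g i = 1) :
    (∑ i ∈ s, f i • E i) * (∑ i ∈ s, g i • E i) = 1 := by
  rw [sum_smul_mul_sum_smul_of_orthogonal hE, ← hEsum]
  exact Finset.sum_congr rfl fun i hi => by rw [hfg i hi, one_smul]

end OrthogonalIdempotents

theorem sub_inv_mul_div_zpow_two_sub_zpow_neg_two {K : Type*} [Field K] {q : K} (hq : q ≠ 0)
    (hq1 : q ^ 2 ≠ 1) (t : K) :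
    (q - q⁻¹) * t / (q ^ (2 : ℤ) - q ^ (-2 : ℤ)) = t / (q + q⁻¹) := by
  have hfactor : q ^ (2 : ℤ) - q ^ (-2 : ℤ) = (q - q⁻¹) * (q + q⁻¹) := by
    rw [_root_.zpow_neg, zpow_ofNat]; ring
  have hne : q - q⁻¹ ≠ 0 := sub_ne_zero.2 fun h => hq1 <| by
    rw [sq]; nth_rewrite 2 [h]; exact mul_inv_cancel₀ hq
  rw [hfactor, mul_div_mul_left _ _ hne]

theorem intertwiner_difference_M_general
    {X : Type*} [Fintype X] [DecidableEq X]
    (D : ℤ) (q : ℂ) (hq : q ≠ 0)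
    (hq1 : q ^ 2 ≠ 1)
    (ϑ : ℤ → ℂ)
    (E : ℤ → Matrix X X ℂ)
    (hEsum : ∑ i ∈ Finset.Icc (0 : ℤ) D, E i = 1)
    (hEmul : ∀ i ∈ Finset.Icc (0 : ℤ) D, ∀ j ∈ Finset.Icc (0 : ℤ) D,
      E i * E j = if i = j then E i else 0)
    (B : Matrix X X ℂ)
    (htriE : ∀ i ∈ Finset.Icc (0 : ℤ) D, ∀ j ∈ Finset.Icc (0 : ℤ) D,
      1 < |i - j| → E i * B * E j = 0)
    (A : Matrix X X ℂ)
    (hA : A = ∑ i ∈ Finset.Icc (0 : ℤ) D, ϑ i • E i)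
    (Z : Matrix X X ℂ)
    (hZE : ∀ i ∈ Finset.Icc (0 : ℤ) D,
      Z * E i = (1 + ϑ i / (q + q⁻¹)) • (E i * B * E i) ∧
      E i * Z = (1 + ϑ i / (q + q⁻¹)) • (E i * B * E i))
    (C : Matrix X X ℂ)
    (hC : C = Z - (q ^ (2 : ℤ) - q ^ (-2 : ℤ))⁻¹ • (q • (A * B) - q⁻¹ • (B * A)))
    (α : ℤ → ℂ) (hα : ∀ i ∈ Finset.Icc (0 : ℤ) D, α i ≠ 0)
    (W : Matrix X X ℂ)
    (hW : W = ∑ i ∈ Finset.Icc (0 : ℤ) D, α i • E i)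
    :
    IsUnit W ∧
    W⁻¹ = ∑ i ∈ Finset.Icc (0 : ℤ) D, (α i)⁻¹ • E i ∧
    C - W⁻¹ * B * W =
      ∑ i ∈ Finset.Icc (0 : ℤ) D, ∑ j ∈ Finset.Icc (0 : ℤ) D,
        if |i - j| = 1 then
          ((q⁻¹ * ϑ j - q * ϑ i) / (q ^ (2 : ℤ) - q ^ (-2 : ℤ)) - α j / α i) •
            (E i * B * E j)
        else 0 := by
  have hW_mul := sum_smul_mul_sum_smul_eq_one hEsum hEmul fun i hi => mul_inv_cancel₀ (hα i hi)
  rw [← hW] at hW_mul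
  have hinv := Matrix.inv_eq_right_inv hW_mul
  refine ⟨IsUnit.of_mul_eq_one _ hW_mul, hinv, ?_⟩
  rw [hC, hinv, hW, sum_smul_mul_mul_sum_smul, hA, sum_smul_mul_eq_sum_sum hEsum,
    mul_sum_smul_eq_sum_sum hEsum, eq_sum_sum_ite_smul_of_mul_eq hEsum fun i hi => (hZE i hi).1]
  simp only [Finset.smul_sum, ← Finset.sum_sub_distrib]
  refine Finset.sum_congr rfl fun i hi => Finset.sum_congr rfl fun j hj => ?_
  obtain rfl | hij := eq_or_ne i j
  · have hdiag := sub_inv_mul_div_zpow_two_sub_zpow_neg_two hq hq1 (ϑ i)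
    rw [if_pos rfl, if_neg (by simp), inv_mul_cancel₀ (hα i hi)]
    match_scalars
    linear_combination -hdiag
  by_cases hadj : |i - j| = 1
  · rw [if_neg hij, if_pos hadj]
    match_scalars
    ring
  · rw [htriE i hi j hj (lt_of_le_of_ne (Int.one_le_abs (sub_ne_zero.2 hij)) (Ne.symm hadj))]
    simp [hij, hadj]

theorem intertwiner_difference_M
    {X : Type*} [Fintype X] [DecidableEq X] [Nonempty X]
    (D : ℤ) (hD : 3 ≤ D) (q a : ℂ) (hq : q ≠ 0) (ha : a ≠ 0)
    (hq1 : q ^ 2 ≠ 1) (hq2 : q ^ 2 ≠ -1)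
    (ϑ : ℤ → ℂ)
    (hϑ : ∀ i : ℤ, ϑ i = a * q ^ (2 * i - D) + a⁻¹ * q ^ (D - 2 * i))
    (β : ℂ) (hβ : β = q ^ (2 : ℤ) + q ^ (-2 : ℤ))
    (E : ℤ → Matrix X X ℂ)
    (hEsum : ∑ i ∈ Finset.Icc (0 : ℤ) D, E i = 1)
    (hEmul : ∀ i ∈ Finset.Icc (0 : ℤ) D, ∀ j ∈ Finset.Icc (0 : ℤ) D,
      E i * E j = if i = j then E i else 0)
    (B : Matrix X X ℂ)
    (htriE : ∀ i ∈ Finset.Icc (0 : ℤ) D, ∀ j ∈ Finset.Icc (0 : ℤ) D,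
      1 < |i - j| → E i * B * E j = 0)
    (A : Matrix X X ℂ)
    (hA : A = ∑ i ∈ Finset.Icc (0 : ℤ) D, ϑ i • E i)
    (Z : Matrix X X ℂ)
    (hZE : ∀ i ∈ Finset.Icc (0 : ℤ) D,
      Z * E i = (1 + ϑ i / (q + q⁻¹)) • (E i * B * E i) ∧
      E i * Z = (1 + ϑ i / (q + q⁻¹)) • (E i * B * E i))
    (C : Matrix X X ℂ)
    (hC : C = Z - (q ^ (2 : ℤ) - q ^ (-2 : ℤ))⁻¹ • (q • (A * B) - q⁻¹ • (B * A)))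
    (α : ℤ → ℂ) (hα : ∀ i ∈ Finset.Icc (0 : ℤ) D, α i ≠ 0)
    (W : Matrix X X ℂ)
    (hW : W = ∑ i ∈ Finset.Icc (0 : ℤ) D, α i • E i)
    :
    IsUnit W ∧
    W⁻¹ = ∑ i ∈ Finset.Icc (0 : ℤ) D, (α i)⁻¹ • E i ∧
    C - W⁻¹ * B * W =
      ∑ i ∈ Finset.Icc (0 : ℤ) D, ∑ j ∈ Finset.Icc (0 : ℤ) D,
        if |i - j| = 1 then
          ((q⁻¹ * ϑ j - q * ϑ i) / (q ^ (2 : ℤ) - q ^ (-2 : ℤ)) - α j / α i) •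
            (E i * B * E j)
        else 0 :=
  intertwiner_difference_M_general D q hq hq1 ϑ E hEsum hEmul B htriE A hA Z hZE C hC α hα W hW
end

section
/- Assume W·A = A·W, W*·B = B·W*, W^{−1}·B·W = C and W*·A·(W*)^{−1} = C. Then conjugation by W*·W sends A ↦ B ↦ C ↦ A; that is, A·(W*·W) = (W*·W)·B, B·(W*·W) = (W*·W)·C, and C·(W*·W) = (W*·W)·A. -/
/-!
The hypotheses say that `W` and `W*` semiconjugate `A, B, C` among each other
(`W* A = C W*`, `W C = B W`, and the two commutations). Composing them gives `B ↦ C` and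
`C ↦ A` for `W* W` directly, while `A ↦ B` only comes out for `W W*`, as `(W W*) A = B (W W*)`;
transposing that, with all four matrices symmetric, gives it for `W* W`.
-/

open Matrix

namespace Matrix

variable {n α : Type*} [Fintype n] [DecidableEq n] [CommRing α] {W X Y : Matrix n n α}

theorem semiconjBy_of_inv_mul_mul_eq (hW : IsUnit W) (h : W⁻¹ * X * W = Y) :
    SemiconjBy W Y X := by
  rw [SemiconjBy, ← h, Matrix.mul_assoc, mul_nonsing_inv_cancel_left _ _
    ((isUnit_iff_isUnit_det W).mp hW)]

theorem semiconjBy_of_mul_mul_inv_eq (hW : IsUnit W) (h : W * X * W⁻¹ = Y) :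
    SemiconjBy W X Y := by
  rw [SemiconjBy, ← h, nonsing_inv_mul_cancel_right _ _ ((isUnit_iff_isUnit_det W).mp hW)]

end Matrix

theorem SemiconjBy.transpose {n α : Type*} [Fintype n] [CommSemiring α] {a x y : Matrix n n α}
    (h : SemiconjBy a x y) : SemiconjBy aᵀ yᵀ xᵀ := by
  rw [SemiconjBy, ← transpose_mul, ← transpose_mul, h.eq]

theorem conjugation_cycles_ABC_general {X : Type*} [Fintype X] [DecidableEq X]
    (W Wstar A B C : Matrix X X ℂ)
    (hWu : IsUnit W) (hWsu : IsUnit Wstar)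
    (hAsymm : A.IsSymm) (hBsymm : B.IsSymm)
    (hWsymm : W.IsSymm) (hWssymm : Wstar.IsSymm)
    (hWA : W * A = A * W) (hWsB : Wstar * B = B * Wstar)
    (hWBW : W⁻¹ * B * W = C) (hWsAWs : Wstar * A * Wstar⁻¹ = C) :
    A * (Wstar * W) = (Wstar * W) * B ∧
    B * (Wstar * W) = (Wstar * W) * C ∧
    C * (Wstar * W) = (Wstar * W) * A := by
  have hWC : SemiconjBy W C B := semiconjBy_of_inv_mul_mul_eq hWu hWBW
  have hWsA : SemiconjBy Wstar A C := semiconjBy_of_mul_mul_inv_eq hWsu hWsAWs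
  have hAB : SemiconjBy (Wstar * W) B A := by
    have h := (hWC.mul_left hWsA).transpose
    rwa [transpose_mul, hWsymm.eq, hWssymm.eq, hAsymm.eq, hBsymm.eq] at h
  exact ⟨hAB.eq.symm, (SemiconjBy.mul_left hWsB hWC).eq.symm,
    (hWsA.mul_left hWA).eq.symm⟩

theorem conjugation_cycles_ABC {X : Type*} [Fintype X] [DecidableEq X] [Nonempty X]
    (W Wstar A B C : Matrix X X ℂ)
    (hWu : IsUnit W) (hWsu : IsUnit Wstar)
    (hAsymm : A.IsSymm) (hBsymm : B.IsSymm)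
    (hWsymm : W.IsSymm) (hWssymm : Wstar.IsSymm)
    (hWA : W * A = A * W) (hWsB : Wstar * B = B * Wstar)
    (hWBW : W⁻¹ * B * W = C) (hWsAWs : Wstar * A * Wstar⁻¹ = C) :
    A * (Wstar * W) = (Wstar * W) * B ∧
    B * (Wstar * W) = (Wstar * W) * C ∧
    C * (Wstar * W) = (Wstar * W) * A :=
  conjugation_cycles_ABC_general W Wstar A B C hWu hWsu hAsymm hBsymm hWsymm hWssymm hWA hWsB hWBW
    hWsAWs
end

section
/- For 0 ≤ i ≤ D one has (W*·W)^{−1}·E_i·(W*·W) = E*_i; moreover (W*·W)^{−1}·W·(W*·W) = W*. -/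
/-!
All the `E i`, `E* i` are symmetric, hence so are `A`, `B`, `W`, `W*`; transposing the
intertwining relation, rewritten as `B (W W*) = (W W*) A`, gives `A Ψ = Ψ B` for `Ψ = W* W`.
Comparing eigenvalues of `A` and `B` on the two sides of `E i Ψ E* j` shows that it vanishes
for `i ≠ j`, so `E i Ψ = Ψ E* i`. Since `W` and `W*` have the same coefficients in the two
systems of idempotents, also `W Ψ = Ψ W*`.
-/

open Matrix Finset

namespace OrthogonalIdempotents

section Semiring

variable {R 𝕜 I : Type*} [Semiring R] [CommSemiring 𝕜] [Algebra 𝕜 R] [Fintype I]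
  {e : I → R}

theorem mul_sum_smul (he : OrthogonalIdempotents e) (c : I → 𝕜) (i : I) :
    e i * ∑ j, c j • e j = c i • e i := by
  classical
  simp [mul_sum, he.mul_eq]

theorem sum_smul_mul (he : OrthogonalIdempotents e) (c : I → 𝕜) (i : I) :
    (∑ j, c j • e j) * e i = c i • e i := by
  classical
  simp [sum_mul, he.mul_eq]

theorem sum_smul_mul_sum_smul (he : OrthogonalIdempotents e) (c d : I → 𝕜) :
    (∑ i, c i • e i) * ∑ j, d j • e j = ∑ i, (c i * d i) • e i := by
  simp only [sum_mul, smul_mul_assoc, he.mul_sum_smul, smul_smul]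

end Semiring

variable {R 𝕜 I : Type*} [Ring R] [Field 𝕜] [Algebra 𝕜 R] [Fintype I]

theorem mul_mul_eq_zero_of_sum_smul_mul_eq {e e' : I → R}
    (he : OrthogonalIdempotents e) (he' : OrthogonalIdempotents e')
    {ϑ : I → 𝕜} {x : R} (hx : (∑ k, ϑ k • e k) * x = x * ∑ k, ϑ k • e' k)
    {i j : I} (hij : ϑ i ≠ ϑ j) : e i * x * e' j = 0 := by
  have hsmul : ϑ i • (e i * x * e' j) = ϑ j • (e i * x * e' j) := by
    calc ϑ i • (e i * x * e' j) = e i * ((∑ k, ϑ k • e k) * x) * e' j := by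
          rw [← mul_assoc, he.mul_sum_smul, smul_mul_assoc, smul_mul_assoc]
      _ = e i * (x * (∑ k, ϑ k • e' k)) * e' j := by rw [hx]
      _ = ϑ j • (e i * x * e' j) := by
          rw [mul_assoc, mul_assoc, he'.sum_smul_mul, mul_smul_comm, mul_smul_comm, mul_assoc]
  rw [← sub_eq_zero, ← sub_smul] at hsmul
  exact (smul_eq_zero.mp hsmul).resolve_left (sub_ne_zero.mpr hij)

end OrthogonalIdempotents

namespace CompleteOrthogonalIdempotents

variable {R I : Type*} [Fintype I]

theorem of_finset [Semiring R] {ι : Type*} [DecidableEq ι] {s : Finset ι} {P : ι → R}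
    (hmul : ∀ i ∈ s, ∀ j ∈ s, P i * P j = if i = j then P i else 0) (hsum : ∑ i ∈ s, P i = 1) :
    CompleteOrthogonalIdempotents (fun i : s ↦ P i) where
  toOrthogonalIdempotents := OrthogonalIdempotents.iff_mul_eq.mpr fun i j ↦ by
    simpa only [Subtype.ext_iff] using hmul i i.2 j j.2
  complete := by rwa [sum_coe_sort s P]

theorem isUnit_sum_smul [Semiring R] {𝕜 : Type*} [Field 𝕜] [Algebra 𝕜 R] {e : I → R}
    (he : CompleteOrthogonalIdempotents e) {c : I → 𝕜} (hc : ∀ i, c i ≠ 0) :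
    IsUnit (∑ i, c i • e i) := by
  refine ⟨⟨∑ i, c i • e i, ∑ i, (c i)⁻¹ • e i, ?_, ?_⟩, rfl⟩ <;>
    simp [he.sum_smul_mul_sum_smul, hc, he.complete]

theorem mul_eq_mul_of_mul_mul_eq_zero [Semiring R] {e e' : I → R}
    (he : CompleteOrthogonalIdempotents e) (he' : CompleteOrthogonalIdempotents e') {x : R}
    (hx : ∀ i j, i ≠ j → e i * x * e' j = 0) (i : I) : e i * x = x * e' i := by
  calc e i * x = e i * x * e' i := by
        conv_lhs => rw [← mul_one (e i * x), ← he'.complete, mul_sum]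
        exact sum_eq_single_of_mem i (mem_univ i) fun j _ hji ↦ hx i j hji.symm
    _ = x * e' i := by
        conv_rhs => rw [← one_mul (x * e' i), ← he.complete, sum_mul]
        rw [sum_eq_single_of_mem i (mem_univ i) fun j _ hji ↦ by rw [← mul_assoc, hx j i hji],
          mul_assoc]

theorem mul_eq_mul_of_sum_smul_mul_eq [Ring R] {𝕜 : Type*} [Field 𝕜] [Algebra 𝕜 R]
    {e e' : I → R} (he : CompleteOrthogonalIdempotents e) (he' : CompleteOrthogonalIdempotents e')
    {ϑ : I → 𝕜} (hϑ : Function.Injective ϑ) {x : R}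
    (hx : (∑ k, ϑ k • e k) * x = x * ∑ k, ϑ k • e' k) (i : I) : e i * x = x * e' i :=
  he.mul_eq_mul_of_mul_mul_eq_zero he' (fun _ _ hij ↦
    he.1.mul_mul_eq_zero_of_sum_smul_mul_eq he'.1 hx (hϑ.ne hij)) i

end CompleteOrthogonalIdempotents

theorem sum_smul_mul_eq_mul_sum_smul {R 𝕜 I : Type*} [Semiring R] [CommSemiring 𝕜]
    [Algebra 𝕜 R] [Fintype I] {e e' : I → R} {x : R} (h : ∀ i, e i * x = x * e' i) (c : I → 𝕜) :
    (∑ i, c i • e i) * x = x * ∑ i, c i • e' i := by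
  simp only [sum_mul, mul_sum, smul_mul_assoc, mul_smul_comm, h]

namespace Matrix

theorem isSymm_sum {n α ι : Type*} [AddCommMonoid α] {s : Finset ι} {M : ι → Matrix n n α}
    (h : ∀ i ∈ s, (M i).IsSymm) : (∑ i ∈ s, M i).IsSymm := by
  rw [IsSymm, transpose_sum]
  exact sum_congr rfl fun i hi ↦ (h i hi).eq

theorem IsSymm.mul_mul_eq_mul_mul_rev {n α : Type*} [Fintype n] [CommSemiring α]
    {A B W W' : Matrix n n α} (hA : A.IsSymm) (hB : B.IsSymm) (hW : W.IsSymm)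
    (hW' : W'.IsSymm) (h : B * (W * W') = W * W' * A) : A * (W' * W) = W' * W * B := by
  simpa only [transpose_mul, hA.eq, hB.eq, hW.eq, hW'.eq, mul_assoc] using
    (congrArg (·ᵀ) h).symm

variable {n K : Type*} [Fintype n] [DecidableEq n] [CommRing K] {A B W W' : Matrix n n K}

theorem mul_mul_eq_mul_mul_of_inv_mul_mul_eq (hW : IsUnit W) (hW' : IsUnit W')
    (h : W⁻¹ * B * W = W' * A * W'⁻¹) : B * (W * W') = W * W' * A := by
  rw [isUnit_iff_isUnit_det] at hW hW'
  calc B * (W * W') = W * (W⁻¹ * B * W) * W' := by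
        simp only [mul_assoc, mul_nonsing_inv_cancel_left _ _ hW]
    _ = W * (W' * A * W'⁻¹) * W' := by rw [h]
    _ = W * W' * A := by simp only [mul_assoc, nonsing_inv_mul _ hW', mul_one]

theorem inv_mul_mul_eq_of_mul_eq_mul {P : Matrix n n K} (hP : IsUnit P) (h : A * P = P * B) :
    P⁻¹ * A * P = B := by
  rw [mul_assoc, h, nonsing_inv_mul_cancel_left _ _ ((isUnit_iff_isUnit_det P).mp hP)]

end Matrix

theorem rho_sends_E_to_Estar_general
    {X : Type*} [Fintype X] [DecidableEq X]
    (D : ℤ)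
    (ϑ : ℤ → ℂ)
    (hϑ : ∀ i ∈ Finset.Icc (0 : ℤ) D, ∀ j ∈ Finset.Icc (0 : ℤ) D,
      ϑ i = ϑ j → i = j)
    (f : ℂ) (hf : f ≠ 0)
    (τ : ℤ → ℂ) (hτ : ∀ i ∈ Finset.Icc (0 : ℤ) D, τ i ≠ 0)
    (E Estar : ℤ → Matrix X X ℂ)
    (hEsymm : ∀ i ∈ Finset.Icc (0 : ℤ) D, (E i).IsSymm)
    (hEssymm : ∀ i ∈ Finset.Icc (0 : ℤ) D, (Estar i).IsSymm)
    (hEsum : ∑ i ∈ Finset.Icc (0 : ℤ) D, E i = 1)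
    (hEmul : ∀ i ∈ Finset.Icc (0 : ℤ) D, ∀ j ∈ Finset.Icc (0 : ℤ) D,
      E i * E j = if i = j then E i else 0)
    (hEssum : ∑ i ∈ Finset.Icc (0 : ℤ) D, Estar i = 1)
    (hEsmul : ∀ i ∈ Finset.Icc (0 : ℤ) D, ∀ j ∈ Finset.Icc (0 : ℤ) D,
      Estar i * Estar j = if i = j then Estar i else 0)
    (A B W Wstar : Matrix X X ℂ)
    (hA : A = ∑ i ∈ Finset.Icc (0 : ℤ) D, ϑ i • E i)
    (hB : B = ∑ i ∈ Finset.Icc (0 : ℤ) D, ϑ i • Estar i)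
    (hW : W = f • ∑ i ∈ Finset.Icc (0 : ℤ) D, τ i • E i)
    (hWstar : Wstar = f • ∑ i ∈ Finset.Icc (0 : ℤ) D, τ i • Estar i)
    (hint : W⁻¹ * B * W = Wstar * A * Wstar⁻¹)
    :
    (∀ i ∈ Finset.Icc (0 : ℤ) D,
      (Wstar * W)⁻¹ * E i * (Wstar * W) = Estar i) ∧
    (Wstar * W)⁻¹ * W * (Wstar * W) = Wstar := by
  set s := Finset.Icc (0 : ℤ) D
  have hE := CompleteOrthogonalIdempotents.of_finset hEmul hEsum
  have hE' := CompleteOrthogonalIdempotents.of_finset hEsmul hEssum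
  have hW' : W = ∑ i : s, (f * τ i) • E i := by
    rw [hW, smul_sum, ← s.sum_coe_sort]; simp only [smul_smul]
  have hWstar' : Wstar = ∑ i : s, (f * τ i) • Estar i := by
    rw [hWstar, smul_sum, ← s.sum_coe_sort]; simp only [smul_smul]
  have hfτ : ∀ i : s, f * τ i ≠ 0 := fun i ↦ mul_ne_zero hf (hτ i i.2)
  have hWu : IsUnit W := hW' ▸ hE.isUnit_sum_smul hfτ
  have hWstaru : IsUnit Wstar := hWstar' ▸ hE'.isUnit_sum_smul hfτ
  have hAΨ : A * (Wstar * W) = Wstar * W * B := by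
    refine IsSymm.mul_mul_eq_mul_mul_rev ?_ ?_ ?_ ?_ <|
      mul_mul_eq_mul_mul_of_inv_mul_mul_eq hWu hWstaru hint
    · exact hA ▸ isSymm_sum fun i hi ↦ (hEsymm i hi).smul _
    · exact hB ▸ isSymm_sum fun i hi ↦ (hEssymm i hi).smul _
    · exact hW ▸ (isSymm_sum fun i hi ↦ (hEsymm i hi).smul _).smul f
    · exact hWstar ▸ (isSymm_sum fun i hi ↦ (hEssymm i hi).smul _).smul f
  have hcomm : ∀ i : s, E i * (Wstar * W) = Wstar * W * Estar i := by
    refine hE.mul_eq_mul_of_sum_smul_mul_eq hE' (fun i j h ↦ Subtype.ext (hϑ i i.2 j j.2 h)) ?_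
    rwa [s.sum_coe_sort (fun k ↦ ϑ k • E k), s.sum_coe_sort (fun k ↦ ϑ k • Estar k), ← hA, ← hB]
  have hΨ : IsUnit (Wstar * W) := hWstaru.mul hWu
  refine ⟨fun i hi ↦ inv_mul_mul_eq_of_mul_eq_mul hΨ (hcomm ⟨i, hi⟩),
    inv_mul_mul_eq_of_mul_eq_mul hΨ ?_⟩
  simpa only [← hW', ← hWstar'] using sum_smul_mul_eq_mul_sum_smul hcomm (fun i ↦ f * τ i)

theorem rho_sends_E_to_Estar
    {X : Type*} [Fintype X] [DecidableEq X] [Nonempty X]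
    (D : ℤ) (hD : 3 ≤ D)
    (ϑ : ℤ → ℂ)
    (hϑ : ∀ i ∈ Finset.Icc (0 : ℤ) D, ∀ j ∈ Finset.Icc (0 : ℤ) D,
      ϑ i = ϑ j → i = j)
    (f : ℂ) (hf : f ≠ 0)
    (τ : ℤ → ℂ) (hτ : ∀ i ∈ Finset.Icc (0 : ℤ) D, τ i ≠ 0)
    (E Estar : ℤ → Matrix X X ℂ)
    (hEsymm : ∀ i ∈ Finset.Icc (0 : ℤ) D, (E i).IsSymm)
    (hEssymm : ∀ i ∈ Finset.Icc (0 : ℤ) D, (Estar i).IsSymm)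
    (hEsum : ∑ i ∈ Finset.Icc (0 : ℤ) D, E i = 1)
    (hEmul : ∀ i ∈ Finset.Icc (0 : ℤ) D, ∀ j ∈ Finset.Icc (0 : ℤ) D,
      E i * E j = if i = j then E i else 0)
    (hEssum : ∑ i ∈ Finset.Icc (0 : ℤ) D, Estar i = 1)
    (hEsmul : ∀ i ∈ Finset.Icc (0 : ℤ) D, ∀ j ∈ Finset.Icc (0 : ℤ) D,
      Estar i * Estar j = if i = j then Estar i else 0)
    (A B W Wstar : Matrix X X ℂ)
    (hA : A = ∑ i ∈ Finset.Icc (0 : ℤ) D, ϑ i • E i)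
    (hB : B = ∑ i ∈ Finset.Icc (0 : ℤ) D, ϑ i • Estar i)
    (hW : W = f • ∑ i ∈ Finset.Icc (0 : ℤ) D, τ i • E i)
    (hWstar : Wstar = f • ∑ i ∈ Finset.Icc (0 : ℤ) D, τ i • Estar i)
    (hint : W⁻¹ * B * W = Wstar * A * Wstar⁻¹)
    :
    (∀ i ∈ Finset.Icc (0 : ℤ) D,
      (Wstar * W)⁻¹ * E i * (Wstar * W) = Estar i) ∧
    (Wstar * W)⁻¹ * W * (Wstar * W) = Wstar :=
  rho_sends_E_to_Estar_general D ϑ hϑ f hf τ hτ E Estar hEsymm hEssymm hEsum hEmul hEssum hEsmul A B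
    W Wstar hA hB hW hWstar hint
end

section
/- For 0 ≤ i ≤ D the following conjugation identities hold: W·E*_i·W^{−1} = (W*)^{−1}·E_i·W* and W^{−1}·E*_i·W = W*·E_i·(W*)^{−1}. -/
/-!
Put `M = W W*`. The intertwining relation says `B M = M A`. Since `E*_i` and `E_i` are the
spectral projections of `B` and `A` for the same pairwise distinct eigenvalues `ϑ_i`,
compressing `B M = M A` by `E*_i` on the left and `E_j` on the right gives
`(ϑ_i - ϑ_j) E*_i M E_j = 0`, so `M` maps the `E_j`-block to the `E*_j`-block, i.e.
`E*_i M = M E_i`; conjugating yields the second identity. All matrices involved are symmetric,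
so transposing the second identity yields the first.
-/

open Matrix Finset

section OrthogonalIdempotents

variable {ι 𝕜 R : Type*} [DecidableEq ι] {S : Finset ι} {E : ι → R}

section Semiring

variable [CommSemiring 𝕜] [Semiring R] [Algebra 𝕜 R]
  (hmul : ∀ i ∈ S, ∀ j ∈ S, E i * E j = if i = j then E i else 0)
include hmul

theorem mul_sum_smul_of_mem (c : ι → 𝕜) {i : ι} (hi : i ∈ S) :
    E i * ∑ j ∈ S, c j • E j = c i • E i := by
  rw [mul_sum, sum_congr rfl fun j hj => by rw [mul_smul_comm, hmul i hi j hj, smul_ite, smul_zero],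
    sum_ite_eq S i, if_pos hi]

theorem sum_smul_mul_of_mem (c : ι → 𝕜) {i : ι} (hi : i ∈ S) :
    (∑ j ∈ S, c j • E j) * E i = c i • E i := by
  rw [sum_mul,
    sum_congr rfl fun j hj => by rw [smul_mul_assoc, hmul j hj i hi, smul_ite, smul_zero],
    sum_ite_eq' S i, if_pos hi]

theorem sum_smul_mul_sum_smul (c d : ι → 𝕜) :
    (∑ i ∈ S, c i • E i) * ∑ i ∈ S, d i • E i = ∑ i ∈ S, (c i * d i) • E i := by
  rw [sum_mul]
  refine sum_congr rfl fun i hi => ?_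
  rw [smul_mul_assoc, mul_sum_smul_of_mem hmul d hi, smul_smul]

end Semiring

variable [Field 𝕜] [Ring R] [Algebra 𝕜 R] (hsum : ∑ i ∈ S, E i = 1)
  (hmul : ∀ i ∈ S, ∀ j ∈ S, E i * E j = if i = j then E i else 0)
include hsum hmul

theorem isUnit_sum_smul {c : ι → 𝕜} (hc : ∀ i ∈ S, c i ≠ 0) :
    IsUnit (∑ i ∈ S, c i • E i) := by
  have hcancel {d : ι → 𝕜} (hd : ∀ i ∈ S, d i = 1) : ∑ i ∈ S, d i • E i = 1 := by
    rw [← hsum]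
    exact sum_congr rfl fun i hi => by rw [hd i hi, one_smul]
  refine isUnit_iff_exists.mpr ⟨∑ i ∈ S, (c i)⁻¹ • E i, ?_, ?_⟩ <;>
    rw [sum_smul_mul_sum_smul hmul] <;> apply hcancel <;> intro i hi
  · exact mul_inv_cancel₀ (hc i hi)
  · exact inv_mul_cancel₀ (hc i hi)

theorem mul_eq_mul_of_sum_smul_mul_eq {F : ι → R} (hFsum : ∑ i ∈ S, F i = 1)
    (hFmul : ∀ i ∈ S, ∀ j ∈ S, F i * F j = if i = j then F i else 0)
    {ϑ : ι → 𝕜} (hϑ : Set.InjOn ϑ S) {M : R}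
    (hM : (∑ i ∈ S, ϑ i • F i) * M = M * ∑ i ∈ S, ϑ i • E i) {i : ι} (hi : i ∈ S) :
    F i * M = M * E i := by
  have hblock {i j : ι} (hi : i ∈ S) (hj : j ∈ S) (hij : i ≠ j) : F i * M * E j = 0 := by
    have hleft : F i * ((∑ k ∈ S, ϑ k • F k) * M) * E j = ϑ i • (F i * M * E j) := by
      rw [← mul_assoc (F i), mul_sum_smul_of_mem hFmul ϑ hi, smul_mul_assoc, smul_mul_assoc]
    have hright : F i * (M * ∑ k ∈ S, ϑ k • E k) * E j = ϑ j • (F i * M * E j) := by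
      rw [← mul_assoc (F i), mul_assoc _ _ (E j), sum_smul_mul_of_mem hmul ϑ hj, mul_smul_comm]
    have hcompress : (ϑ i - ϑ j) • (F i * M * E j) = 0 := by
      rw [sub_smul, ← hleft, ← hright, hM, sub_self]
    exact (smul_eq_zero.mp hcompress).resolve_left (sub_ne_zero.mpr (hϑ.ne hi hj hij))
  calc F i * M = F i * M * ∑ j ∈ S, E j := by rw [hsum, mul_one]
    _ = F i * M * E i := by
        rw [mul_sum]
        exact sum_eq_single_of_mem i hi fun j hj hji => hblock hi hj hji.symm
    _ = (∑ j ∈ S, F j) * M * E i := by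
        rw [sum_mul, sum_mul]
        exact (sum_eq_single_of_mem i hi fun j hj hji => hblock hj hi hji).symm
    _ = M * E i := by rw [hFsum, one_mul]

end OrthogonalIdempotents

namespace Matrix

theorem isSymm_sum_smul {n α ι R : Type*} [AddCommMonoid α] [SMul R α] {S : Finset ι}
    {E : ι → Matrix n n α}
    (hE : ∀ i ∈ S, (E i).IsSymm) (c : ι → R) : (∑ i ∈ S, c i • E i).IsSymm := by
  rw [IsSymm, transpose_sum]
  exact sum_congr rfl fun i hi => (hE i hi).smul (c i)

theorem inv_mul_mul_eq_mul_mul_inv_iff {n α : Type*} [Fintype n] [DecidableEq n] [CommRing α]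
    {U V F E : Matrix n n α} (hU : IsUnit U.det) (hV : IsUnit V.det) :
    U⁻¹ * F * U = V * E * V⁻¹ ↔ F * (U * V) = U * V * E := by
  constructor <;> intro h
  · calc F * (U * V) = U * (U⁻¹ * F * U) * V := by
          simp only [mul_assoc, mul_nonsing_inv_cancel_left _ _ hU]
      _ = U * V * E := by simp only [h, mul_assoc, nonsing_inv_mul _ hV, mul_one]
  · calc U⁻¹ * F * U = U⁻¹ * (F * (U * V)) * V⁻¹ := by
          simp only [mul_assoc, mul_nonsing_inv _ hV, mul_one]
      _ = V * E * V⁻¹ := by simp only [h, mul_assoc, nonsing_inv_mul_cancel_left _ _ hU]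

end Matrix

theorem conjugation_identities_WWstar_general
    {X : Type*} [Fintype X] [DecidableEq X]
    (D : ℤ)
    (ϑ : ℤ → ℂ)
    (hϑ : ∀ i ∈ Finset.Icc (0 : ℤ) D, ∀ j ∈ Finset.Icc (0 : ℤ) D,
      ϑ i = ϑ j → i = j)
    (f : ℂ) (hf : f ≠ 0)
    (τ : ℤ → ℂ) (hτ : ∀ i ∈ Finset.Icc (0 : ℤ) D, τ i ≠ 0)
    (E Estar : ℤ → Matrix X X ℂ)
    (hEsymm : ∀ i ∈ Finset.Icc (0 : ℤ) D, (E i).IsSymm)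
    (hEssymm : ∀ i ∈ Finset.Icc (0 : ℤ) D, (Estar i).IsSymm)
    (hEsum : ∑ i ∈ Finset.Icc (0 : ℤ) D, E i = 1)
    (hEmul : ∀ i ∈ Finset.Icc (0 : ℤ) D, ∀ j ∈ Finset.Icc (0 : ℤ) D,
      E i * E j = if i = j then E i else 0)
    (hEssum : ∑ i ∈ Finset.Icc (0 : ℤ) D, Estar i = 1)
    (hEsmul : ∀ i ∈ Finset.Icc (0 : ℤ) D, ∀ j ∈ Finset.Icc (0 : ℤ) D,
      Estar i * Estar j = if i = j then Estar i else 0)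
    (A B W Wstar : Matrix X X ℂ)
    (hA : A = ∑ i ∈ Finset.Icc (0 : ℤ) D, ϑ i • E i)
    (hB : B = ∑ i ∈ Finset.Icc (0 : ℤ) D, ϑ i • Estar i)
    (hW : W = f • ∑ i ∈ Finset.Icc (0 : ℤ) D, τ i • E i)
    (hWstar : Wstar = f • ∑ i ∈ Finset.Icc (0 : ℤ) D, τ i • Estar i)
    (hint : W⁻¹ * B * W = Wstar * A * Wstar⁻¹)
    :
    ∀ i ∈ Finset.Icc (0 : ℤ) D,
      W * Estar i * W⁻¹ = Wstar⁻¹ * E i * Wstar ∧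
      W⁻¹ * Estar i * W = Wstar * E i * Wstar⁻¹ := by
  intro i hi
  simp only [smul_sum, smul_smul] at hW hWstar
  have hfτ : ∀ j ∈ Icc 0 D, f * τ j ≠ 0 := fun j hj => mul_ne_zero hf (hτ j hj)
  have hWdet : IsUnit W.det :=
    (isUnit_iff_isUnit_det W).mp (hW ▸ isUnit_sum_smul hEsum hEmul hfτ)
  have hWstardet : IsUnit Wstar.det :=
    (isUnit_iff_isUnit_det Wstar).mp (hWstar ▸ isUnit_sum_smul hEssum hEsmul hfτ)
  rw [inv_mul_mul_eq_mul_mul_inv_iff hWdet hWstardet, hA, hB] at hint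
  have hconj : W⁻¹ * Estar i * W = Wstar * E i * Wstar⁻¹ :=
    (inv_mul_mul_eq_mul_mul_inv_iff hWdet hWstardet).mpr
      (mul_eq_mul_of_sum_smul_mul_eq hEsum hEmul hEssum hEsmul hϑ hint hi)
  have hWsymm : Wᵀ = W := hW ▸ isSymm_sum_smul hEsymm _
  have hWstarsymm : Wstarᵀ = Wstar := hWstar ▸ isSymm_sum_smul hEssymm _
  refine ⟨?_, hconj⟩
  simpa only [transpose_mul, transpose_nonsing_inv, hWsymm, hWstarsymm, (hEsymm i hi).eq,
    (hEssymm i hi).eq, mul_assoc] using congrArg transpose hconj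

theorem conjugation_identities_WWstar
    {X : Type*} [Fintype X] [DecidableEq X] [Nonempty X]
    (D : ℤ) (hD : 3 ≤ D)
    (ϑ : ℤ → ℂ)
    (hϑ : ∀ i ∈ Finset.Icc (0 : ℤ) D, ∀ j ∈ Finset.Icc (0 : ℤ) D,
      ϑ i = ϑ j → i = j)
    (f : ℂ) (hf : f ≠ 0)
    (τ : ℤ → ℂ) (hτ : ∀ i ∈ Finset.Icc (0 : ℤ) D, τ i ≠ 0)
    (E Estar : ℤ → Matrix X X ℂ)
    (hEsymm : ∀ i ∈ Finset.Icc (0 : ℤ) D, (E i).IsSymm)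
    (hEssymm : ∀ i ∈ Finset.Icc (0 : ℤ) D, (Estar i).IsSymm)
    (hEsum : ∑ i ∈ Finset.Icc (0 : ℤ) D, E i = 1)
    (hEmul : ∀ i ∈ Finset.Icc (0 : ℤ) D, ∀ j ∈ Finset.Icc (0 : ℤ) D,
      E i * E j = if i = j then E i else 0)
    (hEssum : ∑ i ∈ Finset.Icc (0 : ℤ) D, Estar i = 1)
    (hEsmul : ∀ i ∈ Finset.Icc (0 : ℤ) D, ∀ j ∈ Finset.Icc (0 : ℤ) D,
      Estar i * Estar j = if i = j then Estar i else 0)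
    (A B W Wstar : Matrix X X ℂ)
    (hA : A = ∑ i ∈ Finset.Icc (0 : ℤ) D, ϑ i • E i)
    (hB : B = ∑ i ∈ Finset.Icc (0 : ℤ) D, ϑ i • Estar i)
    (hW : W = f • ∑ i ∈ Finset.Icc (0 : ℤ) D, τ i • E i)
    (hWstar : Wstar = f • ∑ i ∈ Finset.Icc (0 : ℤ) D, τ i • Estar i)
    (hint : W⁻¹ * B * W = Wstar * A * Wstar⁻¹)
    :
    ∀ i ∈ Finset.Icc (0 : ℤ) D,
      W * Estar i * W⁻¹ = Wstar⁻¹ * E i * Wstar ∧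
      W⁻¹ * Estar i * W = Wstar * E i * Wstar⁻¹ :=
  conjugation_identities_WWstar_general D ϑ hϑ f hf τ hτ E Estar hEsymm hEssymm hEsum hEmul hEssum
    hEsmul A B W Wstar hA hB hW hWstar hint
end

section
/- Fix 1 ≤ i ≤ D and assume the matrix identity E*_{i−1}·A·E*_{i−1}·A·E*_i·(1 + ϑ_{i−1}/(q+q^{−1})) = E*_{i−1}·A·E*_i·A·E*_i·(1 + ϑ_i/(q+q^{−1})) + ε·((ϑ_{i−1} − ϑ_i)/(q+q^{−1}))·E*_{i−1}·A·E*_i. Let y, z ∈ X with ∂(x,y) = i−1, ∂(x,z) = i, and y adjacent to z, and let a₁ ∈ ℂ equal the number of common neighbors of y and z. Set z_i = |{w ∈ X : ∂(x,w) = i−1, w adjacent to y, w adjacent to z}|. If 2(q+q^{−1}) + ϑ_{i−1} + ϑ_i ≠ 0, then z_i = (a₁·(q + q^{−1} + ϑ_i) + ε·(ϑ_{i−1} − ϑ_i)) / (2(q+q^{−1}) + ϑ_{i−1} + ϑ_i). -/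
/-! The `(y, z)` entry of `E*_{i-1} A E*_k A E*_i` counts the common neighbours of `y` and `z`
at distance `k` from `x`, and by the triangle inequality every common neighbour of `y` and `z`
lies at distance `i - 1` or `i`. So the `(y, z)` entry of the assumed identity is a linear
equation in `z_i` and `a₁ - z_i`, which is solved for `z_i`. -/

open Matrix Finset

theorem add_inv_ne_zero_of_sq_ne_neg_one {K : Type*} [Field K] {q : K} (hq : q ≠ 0)
    (hq2 : q ^ 2 ≠ -1) : q + q⁻¹ ≠ 0 := by
  intro h
  apply hq2
  field_simp at h
  linear_combination h

theorem eq_div_of_mul_add_div_eq {K : Type*} [Field K] {s u v ε n m : K} (hs : s ≠ 0)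
    (hden : 2 * s + u + v ≠ 0)
    (h : (1 + u / s) * n = (1 + v / s) * m + ε * ((u - v) / s)) :
    n = ((n + m) * (s + v) + ε * (u - v)) / (2 * s + u + v) := by
  rw [eq_div_iff hden]
  field_simp at h
  linear_combination h

namespace SimpleGraph

variable {X : Type*} {G : SimpleGraph X} {x y z : X} {j : ℕ}

theorem dist_eq_or_eq_succ_of_adj_of_adj (hconn : G.Connected) (hy : G.dist x y = j)
    (hz : G.dist x z = j + 1) {w : X} (hwy : G.Adj w y) (hwz : G.Adj w z) :
    G.dist x w = j ∨ G.dist x w = j + 1 := by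
  have h₁ : G.dist x w ≤ G.dist x y + G.dist y w := hconn.dist_triangle
  have h₂ : G.dist x z ≤ G.dist x w + G.dist w z := hconn.dist_triangle
  rw [dist_eq_one_iff_adj.2 hwy.symm] at h₁
  rw [dist_eq_one_iff_adj.2 hwz] at h₂
  omega

theorem card_commonNeighbors_eq_add [Fintype X] [DecidableEq X] [DecidableRel G.Adj]
    (hconn : G.Connected) (hy : G.dist x y = j) (hz : G.dist x z = j + 1) :
    #{w | G.Adj y w ∧ G.Adj z w} =
      #{w | G.dist x w = j ∧ G.Adj w y ∧ G.Adj w z} +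
        #{w | G.dist x w = j + 1 ∧ G.Adj w y ∧ G.Adj w z} := by
  rw [← card_union_of_disjoint (disjoint_filter.2 fun w _ h h' => by omega)]
  congr 1
  ext w
  simp only [mem_filter, mem_univ, true_and, mem_union, G.adj_comm y w, G.adj_comm z w]
  constructor
  · rintro ⟨hwy, hwz⟩
    exact (dist_eq_or_eq_succ_of_adj_of_adj hconn hy hz hwy hwz).imp
      (⟨·, hwy, hwz⟩) (⟨·, hwy, hwz⟩)
  · rintro (⟨-, h⟩ | ⟨-, h⟩) <;> exact h

variable [DecidableEq X]

noncomputable def dualIdempotent (R : Type*) [Zero R] [One R] (G : SimpleGraph X) (x : X)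
    (j : ℕ) : Matrix X X R :=
  diagonal fun y => if G.dist x y = j then 1 else 0

variable [Fintype X] {R : Type*} [Semiring R] {k l : ℕ}

theorem dualIdempotent_mul_mul_dualIdempotent_apply (M : Matrix X X R)
    (hy : G.dist x y = j) (hz : G.dist x z = l) :
    (G.dualIdempotent R x j * M * G.dualIdempotent R x l) y z = M y z := by
  simp [dualIdempotent, hy, hz]

theorem dualIdempotent_mul_adjMatrix_mul_dualIdempotent_mul_adjMatrix_mul_dualIdempotent_apply
    [DecidableRel G.Adj] (hy : G.dist x y = j) (hz : G.dist x z = l) :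
    (G.dualIdempotent R x j * G.adjMatrix R * G.dualIdempotent R x k * G.adjMatrix R *
        G.dualIdempotent R x l) y z =
      #{w | G.dist x w = k ∧ G.Adj w y ∧ G.Adj w z} := by
  have hassoc : ∀ E₁ E₂ E₃ A : Matrix X X R,
      E₁ * A * E₂ * A * E₃ = E₁ * (A * E₂ * A) * E₃ := by
    simp only [Matrix.mul_assoc, implies_true]
  rw [hassoc, dualIdempotent_mul_mul_dualIdempotent_apply _ hy hz, Matrix.mul_apply, card_filter,
    Nat.cast_sum]
  refine sum_congr rfl fun w _ => ?_
  by_cases h1 : G.Adj w y <;> by_cases h2 : G.dist x w = k <;> by_cases h3 : G.Adj w z <;>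
    simp [dualIdempotent, h1, h2, h3, G.adj_comm y w]

end SimpleGraph

theorem zi_formula_general {X : Type*} [Fintype X] [DecidableEq X]
    (G : SimpleGraph X) [DecidableRel G.Adj] (hconn : G.Connected)
    (x : X)
    (q : ℂ) (hq : q ≠ 0) (hq2 : q ^ 2 ≠ -1)
    (ϑ : ℤ → ℂ)
    (ε : ℂ)
    (A : Matrix X X ℂ) (hAdef : A = G.adjMatrix ℂ)
    (Estar : ℕ → Matrix X X ℂ)
    (hEstar : ∀ j : ℕ, Estar j =
      Matrix.diagonal (fun y => if G.dist x y = j then (1 : ℂ) else 0))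
    (i : ℕ) (hi1 : 1 ≤ i)
    (hident :
      (1 + ϑ ((i : ℤ) - 1) / (q + q⁻¹)) •
          (Estar (i - 1) * A * Estar (i - 1) * A * Estar i)
        = (1 + ϑ (i : ℤ) / (q + q⁻¹)) •
            (Estar (i - 1) * A * Estar i * A * Estar i)
          + (ε * ((ϑ ((i : ℤ) - 1) - ϑ (i : ℤ)) / (q + q⁻¹))) •
              (Estar (i - 1) * A * Estar i))
    (y z : X) (hy : G.dist x y = i - 1) (hz : G.dist x z = i) (hyz : G.Adj y z)
    (a₁ : ℂ)
    (ha₁ : a₁ = ((Finset.univ.filter fun w => G.Adj y w ∧ G.Adj z w).card : ℂ))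
    (zi : ℕ)
    (hzi : zi = (Finset.univ.filter
      fun w => G.dist x w = i - 1 ∧ G.Adj w y ∧ G.Adj w z).card)
    (hden : 2 * (q + q⁻¹) + ϑ ((i : ℤ) - 1) + ϑ (i : ℤ) ≠ 0) :
    (zi : ℂ) = (a₁ * (q + q⁻¹ + ϑ (i : ℤ)) + ε * (ϑ ((i : ℤ) - 1) - ϑ (i : ℤ)))
      / (2 * (q + q⁻¹) + ϑ ((i : ℤ) - 1) + ϑ (i : ℤ)) := by
  obtain rfl : Estar = G.dualIdempotent ℂ x := funext hEstar
  subst hAdef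
  have hentry := congrFun₂ hident y z
  simp only [Matrix.add_apply, Matrix.smul_apply, smul_eq_mul,
    SimpleGraph.dualIdempotent_mul_adjMatrix_mul_dualIdempotent_mul_adjMatrix_mul_dualIdempotent_apply
      hy hz, SimpleGraph.dualIdempotent_mul_mul_dualIdempotent_apply _ hy hz,
    SimpleGraph.adjMatrix_apply, if_pos hyz, mul_one] at hentry
  have hcommon := SimpleGraph.card_commonNeighbors_eq_add hconn hy
    (hz.trans (Nat.sub_add_cancel hi1).symm)
  rw [Nat.sub_add_cancel hi1] at hcommon
  rw [ha₁, hcommon, Nat.cast_add, hzi]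
  exact eq_div_of_mul_add_div_eq (add_inv_ne_zero_of_sq_ne_neg_one hq hq2) hden hentry

theorem zi_formula {X : Type*} [Fintype X] [DecidableEq X]
    (G : SimpleGraph X) [DecidableRel G.Adj] (hconn : G.Connected)
    (x : X) (D : ℕ) (hD : 3 ≤ D)
    (q a : ℂ) (hq : q ≠ 0) (ha : a ≠ 0) (hq1 : q ^ 2 ≠ 1) (hq2 : q ^ 2 ≠ -1)
    (ϑ : ℤ → ℂ)
    (hϑ : ∀ k : ℤ, ϑ k = a * q ^ (2 * k - (D : ℤ)) + a⁻¹ * q ^ ((D : ℤ) - 2 * k))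
    (ε : ℂ)
    (A : Matrix X X ℂ) (hAdef : A = G.adjMatrix ℂ)
    (Estar : ℕ → Matrix X X ℂ)
    (hEstar : ∀ j : ℕ, Estar j =
      Matrix.diagonal (fun y => if G.dist x y = j then (1 : ℂ) else 0))
    (i : ℕ) (hi1 : 1 ≤ i) (hiD : i ≤ D)
    (hident :
      (1 + ϑ ((i : ℤ) - 1) / (q + q⁻¹)) •
          (Estar (i - 1) * A * Estar (i - 1) * A * Estar i)
        = (1 + ϑ (i : ℤ) / (q + q⁻¹)) •
            (Estar (i - 1) * A * Estar i * A * Estar i)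
          + (ε * ((ϑ ((i : ℤ) - 1) - ϑ (i : ℤ)) / (q + q⁻¹))) •
              (Estar (i - 1) * A * Estar i))
    (y z : X) (hy : G.dist x y = i - 1) (hz : G.dist x z = i) (hyz : G.Adj y z)
    (a₁ : ℂ)
    (ha₁ : a₁ = ((Finset.univ.filter fun w => G.Adj y w ∧ G.Adj z w).card : ℂ))
    (zi : ℕ)
    (hzi : zi = (Finset.univ.filter
      fun w => G.dist x w = i - 1 ∧ G.Adj w y ∧ G.Adj w z).card)
    (hden : 2 * (q + q⁻¹) + ϑ ((i : ℤ) - 1) + ϑ (i : ℤ) ≠ 0) :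
    (zi : ℂ) = (a₁ * (q + q⁻¹ + ϑ (i : ℤ)) + ε * (ϑ ((i : ℤ) - 1) - ϑ (i : ℤ)))
      / (2 * (q + q⁻¹) + ϑ ((i : ℤ) - 1) + ϑ (i : ℤ)) :=
  zi_formula_general G hconn x q hq hq2 ϑ ε A hAdef Estar hEstar i hi1 hident y z hy hz hyz a₁ ha₁
    zi hzi hden
end
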